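/- Let p be a prime with p ≡ ±1 (mod 60). Then PGL(2,p) has no element of order four that normalises but does not centralise a subgroup of order five; that is, every element g ∈ PGL(2,p) of order 4 with P^g = P for a subgroup P of order 5 satisfies [g, P] = 1. -/

import Mathlib

open MulAction Pointwise
open scoped MatrixGroups

/-- An `s`-arc in a graph: a sequence of `s+1` vertices in which consecutive vertices are
adjacent and `αᵢ ≠ αᵢ₊₂` for all `i`. -/
def SimpleGraph.IsNArc {V : Type*} (Γ : SimpleGraph V) (s : ℕ) (p : Fin (s + 1) → V) : Prop :=
  (∀ i : Fin s, Γ.Adj (p i.castSucc) (p i.succ)) ∧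
    ∀ (i : ℕ) (h : i + 2 ≤ s), p ⟨i, by omega⟩ ≠ p ⟨i + 2, by omega⟩

/-- A group `G` acting on the vertices of `Γ` acts by graph automorphisms. -/
def ActsOn {V : Type*} (Γ : SimpleGraph V) (G : Type*) [Group G] [MulAction G V] : Prop :=
  ∀ (g : G) (u v : V), Γ.Adj u v → Γ.Adj (g • u) (g • v)

/-- `Γ` is locally `(G,s)`-arc-transitive: for each vertex `α`, the stabiliser `G_α` is
transitive on the `s`-arcs starting at `α`; equivalently any two `s`-arcs with the same
initial vertex are related by an element of `G` (which then necessarily fixes that vertex). -/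
def LocallyArcTrans {V : Type*} (Γ : SimpleGraph V) (G : Type*) [Group G] [MulAction G V]
    (s : ℕ) : Prop :=
  ∀ p q : Fin (s + 1) → V, Γ.IsNArc s p → Γ.IsNArc s q → p 0 = q 0 →
    ∃ g : G, ∀ i, g • p i = q i

/-- `G` is quasiprimitive on `Ω`: it is transitive and all nontrivial normal subgroups are
transitive. -/
def IsQuasiprimitive (G Ω : Type*) [Group G] [MulAction G Ω] : Prop :=
  IsPretransitive G Ω ∧ ∀ N : Subgroup G, N.Normal → N ≠ ⊥ → IsPretransitive N Ω

/-- `G` is primitive on `Ω`: transitive and every block is trivial. -/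
def IsPrimitiveAction (G Ω : Type*) [Group G] [MulAction G Ω] : Prop :=
  IsPretransitive G Ω ∧ ∀ B : Set Ω, IsBlock G B → B.Subsingleton ∨ B = Set.univ

/-- 2-transitivity of an action. -/
def IsTwoTrans (G X : Type*) [Group G] [MulAction G X] : Prop :=
  ∀ a b c d : X, a ≠ b → c ≠ d → ∃ g : G, g • a = c ∧ g • b = d

/-- `G` is transitive on the edges of `Γ`. -/
def EdgeTransitive {V : Type*} (Γ : SimpleGraph V) (G : Type*) [Group G] [MulAction G V] : Prop :=
  ∀ a b c d : V, Γ.Adj a b → Γ.Adj c d →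
    ∃ g : G, (g • a = c ∧ g • b = d) ∨ (g • a = d ∧ g • b = c)

/-- The coset graph `Cos(G, L, R)`: a bipartite graph on `[G:L] ⊔ [G:R]`, where two cosets
are adjacent iff they intersect nontrivially. -/
def CosetGraph (G : Type*) [Group G] (L R : Subgroup G) : SimpleGraph ((G ⧸ L) ⊕ (G ⧸ R)) where
  Adj a b :=
    (∃ g : G, a = Sum.inl (g : G ⧸ L) ∧ b = Sum.inr (g : G ⧸ R)) ∨
      (∃ g : G, a = Sum.inr (g : G ⧸ R) ∧ b = Sum.inl (g : G ⧸ L))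
  symm := ⟨by
    rintro a b (⟨g, h1, h2⟩ | ⟨g, h1, h2⟩)
    · exact Or.inr ⟨g, h2, h1⟩
    · exact Or.inl ⟨g, h2, h1⟩⟩
  loopless := ⟨by
    rintro a (⟨g, h1, h2⟩ | ⟨g, h1, h2⟩) <;> rw [h1] at h2 <;> simp at h2⟩

/-- `G` acts on the vertex set of a coset graph (on both coset spaces simultaneously),
by (left) multiplication. -/
instance sumMulAction {G α β : Type*} [Monoid G] [MulAction G α] [MulAction G β] :
    MulAction G (α ⊕ β) where
  smul g := Sum.map (g • ·) (g • ·)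
  one_smul x := by
    cases x with
    | inl a => show Sum.inl ((1 : G) • a) = Sum.inl a; rw [one_smul]
    | inr a => show Sum.inr ((1 : G) • a) = Sum.inr a; rw [one_smul]
  mul_smul g h x := by
    cases x with
    | inl a => show Sum.inl ((g * h) • a) = Sum.inl (g • h • a); rw [mul_smul]
    | inr a => show Sum.inr ((g * h) • a) = Sum.inr (g • h • a); rw [mul_smul]

/-- The amalgams `(A, B, A ⊓ B)` and `(C, D, C ⊓ D)` are isomorphic: there are isomorphisms
`A ≅ C` and `B ≅ D` that agree on `A ⊓ B` and map `A ⊓ B` onto `C ⊓ D`. -/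
def AmalgamIso {G₁ G₂ : Type*} [Group G₁] [Group G₂] (A B : Subgroup G₁)
    (C D : Subgroup G₂) : Prop :=
  ∃ (φ : ↥A ≃* ↥C) (ψ : ↥B ≃* ↥D),
    (∀ (x : G₁) (hA : x ∈ A) (hB : x ∈ B), ((φ ⟨x, hA⟩ : G₂) = (ψ ⟨x, hB⟩ : G₂))) ∧
    (∀ (x : G₁) (hA : x ∈ A), x ∈ B ↔ (φ ⟨x, hA⟩ : G₂) ∈ D) ∧
    (∀ (x : G₁) (hB : x ∈ B), x ∈ A ↔ (ψ ⟨x, hB⟩ : G₂) ∈ C)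

/-- Data witnessing that a quasiprimitive action of `G` on `Ω` has type PA:
a `G`-invariant partition `𝓑` of `Ω` (the fibres of `π`), on which `G` acts faithfully
(via `ρ`), identified with `Δ^k` (`k ≥ 2`) in such a way that `G ≤ H Wr S_k` in product
action, where `H ≤ Sym(Δ)` is almost simple (with socle `T`) and quasiprimitive on `Δ`.
Moreover `N = T^k` is the unique minimal normal subgroup of `G`. -/
structure PAStructure (G : Type*) [Group G] (Ω : Type*) [MulAction G Ω] where
  /-- the ingredient set `Δ` of the product structure -/
  Δ : Type
  /-- the number of factors -/
  k : ℕ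
  two_le_k : 2 ≤ k
  quasiprimitive : IsQuasiprimitive G Ω
  /-- the map sending a point to its block, with blocks identified with `Δ^k` -/
  π : Ω → Fin k → Δ
  π_surj : Function.Surjective π
  /-- the action of `G` on the set of blocks `Δ^k` -/
  ρ : G →* Equiv.Perm (Fin k → Δ)
  ρ_faithful : Function.Injective ρ
  compat : ∀ (g : G) (x : Ω), π (g • x) = ρ g (π x)
  /-- the almost simple group `H ≤ Sym(Δ)` -/
  H : Subgroup (Equiv.Perm Δ)
  H_quasiprimitive : IsQuasiprimitive ↥H Δ
  /-- `G ≤ H Wr S_k` in product action -/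
  wreath : ∀ g : G, ∃ (h : Fin k → Equiv.Perm Δ) (σ : Equiv.Perm (Fin k)),
    (∀ i, h i ∈ H) ∧ ∀ (f : Fin k → Δ) (i : Fin k), ρ g f i = h i (f (σ⁻¹ i))
  /-- the socle `T` of `H` -/
  T : Subgroup (Equiv.Perm Δ)
  T_le : T ≤ H
  T_simple : IsSimpleGroup ↥T
  T_nonabelian : ∃ a b : ↥T, a * b ≠ b * a
  T_normal : ∀ h ∈ H, ∀ t ∈ T, h * t * h⁻¹ ∈ T
  T_centralizer : ∀ h ∈ H, (∀ t ∈ T, h * t = t * h) → h = 1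
  /-- the unique minimal normal subgroup `N = T^k` of `G` -/
  N : Subgroup G
  N_normal : N.Normal
  N_ne_bot : N ≠ ⊥
  N_mem : ∀ g : G, g ∈ N ↔ ∃ t : Fin k → Equiv.Perm Δ, (∀ i, t i ∈ T) ∧
    ∀ (f : Fin k → Δ) (i : Fin k), ρ g f i = t i (f i)
  N_min : ∀ M : Subgroup G, M.Normal → M ≠ ⊥ → N ≤ M

namespace PAStructure

variable {G : Type*} [Group G] {Ω : Type*} [MulAction G Ω]

/-- The point stabiliser `N_α` is the straight diagonal subgroup
`{(t,…,t) : t ∈ R}` of `N_B = R^k`. -/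
def IsStraightDiagonalAt (P : PAStructure G Ω) (α : Ω) : Prop :=
  ∃ R : Subgroup (Equiv.Perm P.Δ),
    ∀ g ∈ P.N, g ∈ MulAction.stabilizer G α ↔
      ∃ t : ↥R, ∀ (f : Fin P.k → P.Δ) (i : Fin P.k), P.ρ g f i = (t : Equiv.Perm P.Δ) (f i)

/-- The point stabiliser `N_α` is a diagonal subgroup
`{(t^{φ₁},…,t^{φ_k}) : t ∈ R}` of `N_B = R^k`, for automorphisms `φᵢ` of `R`;
in particular `N_α ≅ R`. -/
def IsDiagonalAt (P : PAStructure G Ω) (α : Ω) : Prop :=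
  ∃ (R : Subgroup (Equiv.Perm P.Δ)) (φ : Fin P.k → MulAut ↥R),
    ∀ g ∈ P.N, g ∈ MulAction.stabilizer G α ↔
      ∃ t : ↥R, ∀ (f : Fin P.k → P.Δ) (i : Fin P.k),
        P.ρ g f i = ((φ i t : ↥R) : Equiv.Perm P.Δ) (f i)

/-- The PA action is of straight diagonal type. -/
def StraightType (P : PAStructure G Ω) : Prop := ∃ α : Ω, P.IsStraightDiagonalAt α

/-- The PA action is of twisted diagonal type: some point stabiliser `N_α` is a twisted
diagonal subgroup (diagonal, but not straight). -/
def TwistedType (P : PAStructure G Ω) : Prop :=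
  ∃ α : Ω, P.IsDiagonalAt α ∧ ¬ P.IsStraightDiagonalAt α

/-- The PA action is of nondiagonal type: the point stabilisers `N_α` are not diagonal
subgroups (`N_α ≇ R`). -/
def NondiagonalType (P : PAStructure G Ω) : Prop := ∃ α : Ω, ¬ P.IsDiagonalAt α

end PAStructure

/-- `PGL(2,p)`: the projective general linear group of degree 2 over `ZMod p`. -/
abbrev PGL2 (p : ℕ) [Fact p.Prime] :=
  Matrix.GeneralLinearGroup (Fin 2) (ZMod p) ⧸
    Subgroup.center (Matrix.GeneralLinearGroup (Fin 2) (ZMod p))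

section AuxPGL

variable {K : Type*} [Field K]

local notation "M2" => Matrix (Fin 2) (Fin 2) K
local notation "GL2" => (Matrix (Fin 2) (Fin 2) K)ˣ
local notation "PGLK" => (Matrix (Fin 2) (Fin 2) K)ˣ ⧸ Subgroup.center (Matrix (Fin 2) (Fin 2) K)ˣ

private lemma cayley2 (A : M2) : A * A = A.trace • A - A.det • 1 := by
  ext i j
  fin_cases i <;> fin_cases j <;>
    simp [Matrix.mul_apply, Fin.sum_univ_two, Matrix.trace_fin_two, Matrix.det_fin_two,
      Matrix.one_apply] <;> ring

private lemma indep2 {A : M2} (hA : ∀ r : K, A ≠ r • 1)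
    {α β α' β' : K} (h : α • A + β • (1 : M2) = α' • A + β' • 1) :
    α = α' ∧ β = β' := by
  by_cases hαα : α = α'
  · subst hαα
    refine ⟨rfl, ?_⟩
    have h2 : β • (1 : M2) = β' • 1 := add_left_cancel h
    have := congrFun (congrFun h2 0) 0
    simpa [Matrix.one_apply] using this
  · exfalso
    apply hA ((α - α')⁻¹ * (β' - β))
    have h2 : (α - α') • A = (β' - β) • (1 : M2) := by
      rw [sub_smul, sub_smul]
      linear_combination (norm := module) h
    rw [mul_smul, ← h2, smul_smul, inv_mul_cancel₀ (sub_ne_zero.mpr hαα), one_smul]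

private lemma pow5 (A : M2) (a d : K) (h2 : A * A = a • A - d • 1) :
    A ^ 5 = (a ^ 4 - 3 * a ^ 2 * d + d ^ 2) • A - (a ^ 3 * d - 2 * a * d ^ 2) • 1 := by
  have e2 : A ^ 2 = a • A - d • 1 := by rw [pow_two, h2]
  have e3 : A ^ 3 = (a ^ 2 - d) • A - (a * d) • 1 := by
    rw [pow_succ, e2, sub_mul, smul_mul_assoc, smul_mul_assoc, one_mul, h2]; module
  have e4 : A ^ 4 = (a ^ 3 - 2 * a * d) • A - (a ^ 2 * d - d ^ 2) • 1 := by
    rw [pow_succ, e3, sub_mul, smul_mul_assoc, smul_mul_assoc, one_mul, h2]; module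
  rw [pow_succ, e4, sub_mul, smul_mul_assoc, smul_mul_assoc, one_mul, h2]; module

private lemma scalar_mem_center {r : K} (U : GL2) (h : (U : M2) = r • 1) :
    U ∈ Subgroup.center GL2 := by
  rw [Subgroup.mem_center_iff]
  intro g
  apply Units.ext
  show (g : M2) * U = (U : M2) * g
  rw [h, smul_mul_assoc, mul_smul_comm, one_mul, mul_one]

private lemma center_is_scalar (U : GL2) (h : U ∈ Subgroup.center GL2) :
    ∃ r : K, (U : M2) = r • 1 := by
  rw [Subgroup.mem_center_iff] at h
  have e1 : (!![(1:K),1;0,1]) * (!![1,-1;0,1]) = 1 := by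
    ext i j; fin_cases i <;> fin_cases j <;> simp [Matrix.mul_apply, Fin.sum_univ_two, Matrix.one_apply]
  have e2 : (!![(1:K),-1;0,1]) * (!![1,1;0,1]) = 1 := by
    ext i j; fin_cases i <;> fin_cases j <;> simp [Matrix.mul_apply, Fin.sum_univ_two, Matrix.one_apply]
  have e3 : (!![(1:K),0;1,1]) * (!![1,0;-1,1]) = 1 := by
    ext i j; fin_cases i <;> fin_cases j <;> simp [Matrix.mul_apply, Fin.sum_univ_two, Matrix.one_apply]
  have e4 : (!![(1:K),0;-1,1]) * (!![1,0;1,1]) = 1 := by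
    ext i j; fin_cases i <;> fin_cases j <;> simp [Matrix.mul_apply, Fin.sum_univ_two, Matrix.one_apply]
  have h1 : (!![(1:K),1;0,1]) * (U : M2) = (U : M2) * !![1,1;0,1] :=
    congrArg Units.val (h ⟨!![1,1;0,1], !![1,-1;0,1], e1, e2⟩)
  have h2 : (!![(1:K),0;1,1]) * (U : M2) = (U : M2) * !![1,0;1,1] :=
    congrArg Units.val (h ⟨!![1,0;1,1], !![1,0;-1,1], e3, e4⟩)
  set A := (U : M2) with hA
  refine ⟨A 0 0, ?_⟩
  have p1 := congrFun (congrFun h1 0 : _) 0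
  have p2 := congrFun (congrFun h1 1 : _) 1
  have p3 := congrFun (congrFun h2 1 : _) 1
  have p4 := congrFun (congrFun h1 0 : _) 1
  simp [Matrix.mul_apply, Fin.sum_univ_two] at p1 p2 p3 p4
  ext i j
  fin_cases i <;> fin_cases j <;>
    simp [Matrix.one_apply] <;> [skip; skip; skip] <;>
    first | linear_combination p3 | linear_combination p1 | linear_combination p4

private lemma det_unit_ne_zero (X : GL2) : Matrix.det (X : M2) ≠ 0 := by
  have h : Matrix.det (X : M2) * Matrix.det ((X⁻¹ : GL2) : M2) = 1 := by
    rw [← Matrix.det_mul]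
    norm_cast
    rw [mul_inv_cancel]
    simp
  intro h0
  rw [h0, zero_mul] at h
  exact zero_ne_one h

private lemma scalar_of_mk_eq_one (W : GL2)
    (h : (QuotientGroup.mk W : PGLK) = 1) :
    ∃ c : K, c ≠ 0 ∧ (W : M2) = c • 1 := by
  rw [QuotientGroup.eq_one_iff] at h
  obtain ⟨c, hc⟩ := center_is_scalar W h
  refine ⟨c, ?_, hc⟩
  intro h0
  apply det_unit_ne_zero W
  rw [hc, h0, zero_smul, Matrix.det_zero]

private lemma mk_eq_one_of_scalar (W : GL2) (c : K) (h : (W : M2) = c • 1) :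
    (QuotientGroup.mk W : PGLK) = 1 := by
  rw [QuotientGroup.eq_one_iff]
  exact scalar_mem_center W h

private lemma nonscalar_of_mk_ne_one (W : GL2)
    (h : (QuotientGroup.mk W : PGLK) ≠ 1) :
    ∀ r : K, (W : M2) ≠ r • 1 := by
  intro r hr
  exact h (mk_eq_one_of_scalar W r hr)


private lemma mk_pow (X : GL2) (n : ℕ) :
    (QuotientGroup.mk (X ^ n) : PGLK) = (QuotientGroup.mk X : PGLK) ^ n :=
  map_pow (QuotientGroup.mk' _) X n

private lemma key5 (X : GL2) (hx5 : (QuotientGroup.mk X : PGLK) ^ 5 = 1)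
    (hne : (QuotientGroup.mk X : PGLK) ≠ 1) :
    (Matrix.trace (X : M2)) ^ 4 - 3 * (Matrix.trace (X : M2)) ^ 2 * (Matrix.det (X : M2))
      + (Matrix.det (X : M2)) ^ 2 = 0 := by
  set a := Matrix.trace (X : M2) with ha
  set d := Matrix.det (X : M2) with hd
  have h1 : (QuotientGroup.mk (X ^ 5) : PGLK) = 1 := by rw [mk_pow, hx5]
  obtain ⟨e, he0, he⟩ := scalar_of_mk_eq_one (X ^ 5) h1
  have hval : ((X : M2)) ^ 5 = e • 1 := by
    rw [← Units.val_pow_eq_pow_val, he]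
  rw [pow5 (X : M2) a d (cayley2 (X : M2))] at hval
  have hcomb : (a ^ 4 - 3 * a ^ 2 * d + d ^ 2) • (X : M2)
      + (-(a ^ 3 * d - 2 * a * d ^ 2)) • (1 : M2) = (0 : K) • (X : M2) + e • 1 := by
    rw [neg_smul, zero_smul, zero_add, ← sub_eq_add_neg, hval]
  exact (indep2 (nonscalar_of_mk_ne_one X hne) hcomb).1

private lemma lemA (h2K : (2 : K) ≠ 0) (h5K : (5 : K) ≠ 0) (x y : PGLK)
    (hx : orderOf x = 5) (hconj : y * x * y⁻¹ = x⁻¹) : y ^ 2 = 1 := by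
  obtain ⟨X, rfl⟩ := QuotientGroup.mk_surjective x
  obtain ⟨Y, rfl⟩ := QuotientGroup.mk_surjective y
  set A := ((X : M2)) with hA
  set B := ((Y : M2)) with hB
  set Bi := (((Y⁻¹ : GL2) : M2)) with hBi
  set a := Matrix.trace A with ha
  set d := Matrix.det A with hd
  have hBBi : B * Bi = 1 := by
    rw [hB, hBi, ← Units.val_mul, mul_inv_cancel, Units.val_one]
  have hBiB : Bi * B = 1 := by
    rw [hB, hBi, ← Units.val_mul, inv_mul_cancel, Units.val_one]
  have hx5 : (QuotientGroup.mk X : PGLK) ^ 5 = 1 := by rw [← hx]; exact pow_orderOf_eq_one _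
  have hxne : (QuotientGroup.mk X : PGLK) ≠ 1 := by
    intro h; rw [h, orderOf_one] at hx; norm_num at hx
  have hns := nonscalar_of_mk_ne_one X hxne
  have hκ := key5 X hx5 hxne
  have hdne : d ≠ 0 := det_unit_ne_zero X
  rw [← ha, ← hd] at hκ
  have hane : a ≠ 0 := by
    intro h0
    apply hdne
    have hsq : d ^ 2 = 0 := by linear_combination hκ + (-a^3 + 3*a*d) * h0
    exact pow_eq_zero_iff (by norm_num) |>.mp hsq
  -- lift the conjugation relation
  have hrel : (QuotientGroup.mk (Y * X * Y⁻¹ * X) : PGLK) = 1 := by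
    have : (QuotientGroup.mk (Y * X * Y⁻¹ * X) : PGLK)
        = (QuotientGroup.mk Y) * (QuotientGroup.mk X) * (QuotientGroup.mk Y)⁻¹
          * (QuotientGroup.mk X) := rfl
    rw [this, hconj, inv_mul_cancel]
  obtain ⟨c, hc0, hc⟩ := scalar_of_mk_eq_one _ hrel
  have h1 : B * A * Bi * A = c • 1 := by
    rw [hA, hB, hBi]
    rw [show (Y : M2) * X * (Y⁻¹ : GL2) * X = ((Y * X * Y⁻¹ * X : GL2) : M2) by
      simp [Units.val_mul]]
    exact hc
  have hAR : A * (a • 1 - A) = d • (1 : M2) := by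
    rw [mul_sub, mul_smul_comm, mul_one, cayley2 A, ← ha, ← hd]; module
  have h2 : d • (B * A * Bi) = c • (a • (1 : M2) - A) := by
    have h3 := congrArg (· * (a • (1 : M2) - A)) h1
    rw [mul_assoc (B * A * Bi) A _, hAR, mul_smul_comm, mul_one, smul_mul_assoc, one_mul] at h3
    exact h3
  have htrBAB : Matrix.trace (B * A * Bi) = a := by
    rw [Matrix.trace_mul_comm (B * A) Bi, ← mul_assoc, hBiB, one_mul, ha]
  have htr : d * a = c * a := by
    have h4 := congrArg Matrix.trace h2
    simp only [Matrix.trace_smul, htrBAB, Matrix.trace_sub, Matrix.trace_one,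
      smul_eq_mul, Fintype.card_fin] at h4
    linear_combination h4
  have hcd : c = d := (mul_right_cancel₀ hane htr).symm
  have R1 : B * A * Bi = a • (1 : M2) - A := by
    apply smul_right_injective M2 hdne
    show d • (B * A * Bi) = d • (a • (1 : M2) - A)
    rw [h2, hcd]
  have R2 : B * A = a • B - A * B := by
    have h5 := congrArg (· * B) R1
    rw [mul_assoc (B * A) Bi B, hBiB, mul_one, sub_mul, smul_mul_assoc, one_mul] at h5
    exact h5
  set Z := (2 : K) • A - a • (1 : M2) with hZ
  have hZB : B * Z = -(Z * B) := by
    simp only [hZ, mul_sub, sub_mul, mul_smul_comm, smul_mul_assoc, mul_one, one_mul]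
    rw [R2]; module
  have hZZ : Z * Z = (a ^ 2 - 4 * d) • (1 : M2) := by
    simp only [hZ, mul_sub, sub_mul, mul_smul_comm, smul_mul_assoc, mul_one, one_mul]
    rw [cayley2 A, ← ha, ← hd]; module
  have hδ : a ^ 2 - 4 * d ≠ 0 := by
    intro h0
    have h5d : (5 : K) * d ^ 2 = 0 := by linear_combination hκ - (a^2 + d) * h0
    rcases mul_eq_zero.mp h5d with h | h
    · exact h5K h
    · exact hdne (pow_eq_zero_iff (by norm_num) |>.mp h)
  have htrB : Matrix.trace B = 0 := by
    have t1 : Z * (B * Z) = -((a ^ 2 - 4 * d) • B) := by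
      rw [hZB, mul_neg, ← mul_assoc, hZZ, smul_mul_assoc, one_mul]
    have t2 : Matrix.trace (Z * (B * Z)) = (a ^ 2 - 4 * d) * Matrix.trace B := by
      rw [Matrix.trace_mul_comm Z (B * Z), mul_assoc, hZZ, mul_smul_comm, mul_one,
        Matrix.trace_smul, smul_eq_mul]
    have t3 : (a ^ 2 - 4 * d) * Matrix.trace B = -((a ^ 2 - 4 * d) * Matrix.trace B) := by
      conv_lhs => rw [← t2]
      rw [t1, Matrix.trace_neg, Matrix.trace_smul, smul_eq_mul]
    have t4 : (2 * (a ^ 2 - 4 * d)) * Matrix.trace B = 0 := by linear_combination t3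
    rcases mul_eq_zero.mp t4 with h | h
    · exact absurd h (mul_ne_zero h2K hδ)
    · exact h
  have hY2 : ((Y ^ 2 : GL2) : M2) = (-(Matrix.det B)) • 1 := by
    rw [Units.val_pow_eq_pow_val, pow_two, ← hB, cayley2 B, htrB, zero_smul, zero_sub, neg_smul]
  calc (QuotientGroup.mk Y : PGLK) ^ 2 = QuotientGroup.mk (Y ^ 2) := (mk_pow Y 2).symm
    _ = 1 := mk_eq_one_of_scalar _ _ hY2

private lemma lemB (h5K : (5 : K) ≠ 0) (x y : PGLK)
    (hx : orderOf x = 5) (hconj : y * x * y⁻¹ = x ^ 2) : False := by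
  obtain ⟨X, rfl⟩ := QuotientGroup.mk_surjective x
  obtain ⟨Y, rfl⟩ := QuotientGroup.mk_surjective y
  set A := ((X : M2)) with hA
  set B := ((Y : M2)) with hB
  set Bi := (((Y⁻¹ : GL2) : M2)) with hBi
  set a := Matrix.trace A with ha
  set d := Matrix.det A with hd
  have hBBi : B * Bi = 1 := by
    rw [hB, hBi, ← Units.val_mul, mul_inv_cancel, Units.val_one]
  have hBiB : Bi * B = 1 := by
    rw [hB, hBi, ← Units.val_mul, inv_mul_cancel, Units.val_one]
  have hx5 : (QuotientGroup.mk X : PGLK) ^ 5 = 1 := by rw [← hx]; exact pow_orderOf_eq_one _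
  have hxne : (QuotientGroup.mk X : PGLK) ≠ 1 := by
    intro h; rw [h, orderOf_one] at hx; norm_num at hx
  have hns := nonscalar_of_mk_ne_one X hxne
  have hκ := key5 X hx5 hxne
  rw [← ha, ← hd] at hκ
  have hdne : d ≠ 0 := det_unit_ne_zero X
  have hdetB : Matrix.det B * Matrix.det Bi = 1 := by
    rw [← Matrix.det_mul, hBBi, Matrix.det_one]
  -- first relation : B*A*Bi = c • (A*A)
  have hrel : (QuotientGroup.mk (Y * X * Y⁻¹ * (X ^ 2)⁻¹) : PGLK) = 1 := by
    have : (QuotientGroup.mk (Y * X * Y⁻¹ * (X ^ 2)⁻¹) : PGLK)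
        = (QuotientGroup.mk Y) * (QuotientGroup.mk X) * (QuotientGroup.mk Y)⁻¹
          * ((QuotientGroup.mk X) ^ 2)⁻¹ := rfl
    rw [this, hconj, mul_inv_cancel]
  obtain ⟨c, hc0, hc⟩ := scalar_of_mk_eq_one _ hrel
  have h1 : B * A * Bi = c • (A * A) := by
    have h0 : ((Y * X * Y⁻¹ * (X ^ 2)⁻¹ : GL2) : M2) * ((X ^ 2 : GL2) : M2)
        = c • ((X ^ 2 : GL2) : M2) := by rw [hc, smul_mul_assoc, one_mul]
    rw [← Units.val_mul, mul_assoc (Y * X * Y⁻¹), inv_mul_cancel, mul_one] at h0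
    rw [show ((Y * X * Y⁻¹ : GL2) : M2) = B * A * Bi by simp [Units.val_mul, hA, hB, hBi]] at h0
    rw [show ((X ^ 2 : GL2) : M2) = A * A by
      rw [Units.val_pow_eq_pow_val, pow_two, hA]] at h0
    exact h0
  have h1' : B * A * Bi = (c * a) • A - (c * d) • 1 := by
    rw [h1, cayley2 A, ← ha, ← hd]; module
  -- second relation from y^2 x y^-2 = x⁻¹
  have hconj2 : (QuotientGroup.mk (Y ^ 2) : PGLK) * (QuotientGroup.mk X)
      * (QuotientGroup.mk (Y ^ 2) : PGLK)⁻¹ = (QuotientGroup.mk X : PGLK)⁻¹ := by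
    rw [mk_pow]
    set xq := (QuotientGroup.mk X : PGLK)
    set yq := (QuotientGroup.mk Y : PGLK)
    have e2 : yq ^ 2 * xq * (yq ^ 2)⁻¹ = xq ^ 4 := by
      have h0 : yq ^ 2 * xq * (yq ^ 2)⁻¹ = yq * (yq * xq * yq⁻¹) * yq⁻¹ := by
        simp only [pow_two, mul_inv_rev, mul_assoc]
      rw [h0, hconj]
      have h0' : yq * xq ^ 2 * yq⁻¹ = (yq * xq * yq⁻¹) * (yq * xq * yq⁻¹) := by
        simp only [pow_two, mul_assoc, inv_mul_cancel_left]
      rw [h0', hconj, ← pow_add]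
    rw [e2]
    have h45 : xq ^ 4 * xq = 1 := by rw [← pow_succ]; exact hx5
    exact eq_inv_of_mul_eq_one_left h45
  have hrel2 : (QuotientGroup.mk (Y ^ 2 * X * (Y ^ 2)⁻¹ * X) : PGLK) = 1 := by
    have h0 : (QuotientGroup.mk (Y ^ 2 * X * (Y ^ 2)⁻¹ * X) : PGLK)
        = (QuotientGroup.mk (Y ^ 2)) * (QuotientGroup.mk X) * (QuotientGroup.mk (Y ^ 2))⁻¹
          * (QuotientGroup.mk X) := rfl
    rw [h0, hconj2, inv_mul_cancel]
  obtain ⟨e, he0, he⟩ := scalar_of_mk_eq_one _ hrel2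
  have h2m : (B * B) * A * (Bi * Bi) * A = e • 1 := by
    have h0 : ((Y ^ 2 * X * (Y ^ 2)⁻¹ * X : GL2) : M2) = (B * B) * A * (Bi * Bi) * A := by
      rw [← inv_pow]
      simp [Units.val_mul, Units.val_pow_eq_pow_val, pow_two, hA, hB, hBi]
    rw [← h0]; exact he
  have hAR : A * (a • 1 - A) = d • (1 : M2) := by
    rw [mul_sub, mul_smul_comm, mul_one, cayley2 A, ← ha, ← hd]; module
  have h3 : d • ((B * B) * A * (Bi * Bi)) = e • (a • (1 : M2) - A) := by
    have h4 := congrArg (· * (a • (1 : M2) - A)) h2m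
    rw [mul_assoc ((B * B) * A * (Bi * Bi)) A _, hAR, mul_smul_comm, mul_one,
      smul_mul_assoc, one_mul] at h4
    exact h4
  have hL : (B * B) * A * (Bi * Bi) = (c ^ 2 * a ^ 2) • A - (c ^ 2 * a * d + c * d) • 1 := by
    have e0 : (B * B) * A * (Bi * Bi) = B * (B * A * Bi) * Bi := by noncomm_ring
    rw [e0, h1', mul_sub, sub_mul, mul_smul_comm, smul_mul_assoc, h1', mul_smul_comm,
      smul_mul_assoc, mul_one, hBBi]
    module
  have hcomb : (d * (c ^ 2 * a ^ 2)) • A + (-(d * (c ^ 2 * a * d + c * d))) • (1 : M2)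
      = (-e) • A + (e * a) • 1 := by
    rw [hL] at h3
    linear_combination (norm := module) h3
  have hiii := (indep2 hns hcomb).1
  have hii : c ^ 2 * d = 1 := by
    have h4 := congrArg Matrix.det h1
    rw [Matrix.det_mul, Matrix.det_mul, Matrix.det_smul, Matrix.det_mul, Fintype.card_fin] at h4
    have h5 : Matrix.det B * Matrix.det A * Matrix.det Bi
        = Matrix.det B * Matrix.det Bi * Matrix.det A := by ring
    rw [h5, hdetB, one_mul] at h4
    have h6 : d * (c ^ 2 * d) = d * 1 := by rw [← hd] at h4; linear_combination -h4
    exact mul_left_cancel₀ hdne h6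
  have hv : e ^ 2 = d ^ 2 := by
    have h4 := congrArg Matrix.det h2m
    rw [Matrix.det_mul, Matrix.det_mul, Matrix.det_mul, Matrix.det_mul, Matrix.det_mul,
      Matrix.det_smul, Matrix.det_one, Fintype.card_fin] at h4
    have h5 : Matrix.det B * Matrix.det B * Matrix.det A * (Matrix.det Bi * Matrix.det Bi)
        * Matrix.det A = (Matrix.det B * Matrix.det Bi) * (Matrix.det B * Matrix.det Bi)
        * (Matrix.det A * Matrix.det A) := by ring
    rw [h5, hdetB] at h4
    rw [← hd] at h4
    linear_combination -h4
  have he' : e = -a ^ 2 := by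
    have : e = -(c ^ 2 * d) * a ^ 2 := by linear_combination hiii
    rw [hii] at this; linear_combination this
  have hae : a ^ 4 - d ^ 2 = 0 := by
    have : a ^ 4 = e ^ 2 := by rw [he']; ring
    rw [hv] at this; linear_combination this
  have hq1 : 2 * d ^ 2 - 3 * a ^ 2 * d = 0 := by linear_combination hκ - hae
  have hfin : (5 : K) * d ^ 4 = 0 := by
    linear_combination (-(2 * d ^ 2 + 3 * a ^ 2 * d)) * hq1 - 9 * d ^ 2 * hae
  rcases mul_eq_zero.mp hfin with h | h
  · exact h5K h
  · exact hdne (pow_eq_zero_iff (by norm_num) |>.mp h)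

end AuxPGL

/-- **Lemma (order-4 elements of `PGL(2,p)` centralise the order-5 subgroups they
normalise).**
Let `p` be a prime with `p ≡ ±1 (mod 60)`.  Then `PGL(2,p)` has no element of order
four that normalises but does not centralise a subgroup of order five: every element
`g` of order 4 normalising a subgroup `P` of order 5 commutes with all of `P`. -/
theorem PGL2_orderFour_centralizes_normalized_orderFive
    (p : ℕ) (hp : p.Prime) (hmod : (p : ZMod 60) = 1 ∨ (p : ZMod 60) = -1) :
    haveI : Fact p.Prime := ⟨hp⟩
    ∀ g : PGL2 p, orderOf g = 4 →
      ∀ P : Subgroup (PGL2 p), Nat.card ↥P = 5 → g ∈ Subgroup.normalizer (P : Set (PGL2 p)) →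
        ∀ x ∈ P, g * x = x * g := by
  haveI : Fact p.Prime := ⟨hp⟩
  intro g hg P hP hgN x hxP
  have hp2 : p ≠ 2 := by rintro rfl; revert hmod; decide
  have hp5 : p ≠ 5 := by rintro rfl; revert hmod; decide
  have h2K : (2 : ZMod p) ≠ 0 := by
    have h0 : ((2 : ℕ) : ZMod p) ≠ 0 := by
      rw [Ne, ZMod.natCast_eq_zero_iff]
      intro h
      exact hp2 ((Nat.prime_dvd_prime_iff_eq hp Nat.prime_two).mp h)
    simpa using h0
  have h5K : (5 : ZMod p) ≠ 0 := by
    have h0 : ((5 : ℕ) : ZMod p) ≠ 0 := by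
      rw [Ne, ZMod.natCast_eq_zero_iff]
      intro h
      exact hp5 ((Nat.prime_dvd_prime_iff_eq hp (by norm_num)).mp h)
    simpa using h0
  by_cases hx1 : x = 1
  · subst hx1; simp
  have hxo : orderOf x = 5 := by
    have h1 : orderOf (⟨x, hxP⟩ : P) ∣ 5 := hP ▸ orderOf_dvd_natCard _
    have h2 : orderOf x ∣ 5 := by
      rwa [← orderOf_injective P.subtype Subtype.coe_injective ⟨x, hxP⟩] at h1
    rcases (Nat.Prime.eq_one_or_self_of_dvd (by norm_num : Nat.Prime 5) _ h2) with h | h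
    · exact absurd (orderOf_eq_one_iff.mp h) hx1
    · exact h
  have hx5 : x ^ (5 : ℕ) = 1 := by rw [← hxo]; exact pow_orderOf_eq_one x
  haveI hfin : Finite ↥P := Nat.finite_of_card_ne_zero (by rw [hP]; norm_num)
  have hzp : Subgroup.zpowers x = P := by
    apply Subgroup.eq_of_le_of_card_ge (Subgroup.zpowers_le.mpr hxP)
    rw [Nat.card_zpowers, hxo, hP]
  have hy : g * x * g⁻¹ ∈ P := (Subgroup.mem_normalizer_iff.mp hgN x).mp hxP
  rw [← hzp] at hy
  obtain ⟨k, hk⟩ := Subgroup.mem_zpowers_iff.mp hy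
  obtain ⟨m, hmlt, hk'⟩ : ∃ m : ℕ, m < 5 ∧ x ^ m = g * x * g⁻¹ := by
    refine ⟨(k % 5).toNat, ?_, ?_⟩
    · have h1 := Int.emod_lt_of_pos k (show (0 : ℤ) < 5 by norm_num)
      have h2 := Int.emod_nonneg k (show (5 : ℤ) ≠ 0 by norm_num)
      omega
    · rw [← zpow_natCast, Int.toNat_of_nonneg (Int.emod_nonneg k (by norm_num))]
      rw [show ((5 : ℤ)) = (orderOf x : ℤ) by rw [hxo]; norm_num, zpow_mod_orderOf, hk]
  have cp : ∀ n : ℕ, (g⁻¹ * x * g) ^ n = g⁻¹ * x ^ n * g := by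
    intro n
    simpa [inv_inv] using (conj_pow (i := n) (a := g⁻¹) (b := x))
  interval_cases m
  · exfalso
    apply hx1
    have h0 : g * x * g⁻¹ = 1 := by rw [← hk']; norm_num
    calc x = g⁻¹ * (g * x * g⁻¹) * g := by group
    _ = 1 := by rw [h0]; group
  · rw [pow_one] at hk'
    exact (mul_inv_eq_iff_eq_mul.mp hk'.symm)
  · exact absurd (lemB h5K x g hxo hk'.symm) id
  · exfalso
    have hc : g * x * g⁻¹ = x ^ 3 := hk'.symm
    have hw3 : (g⁻¹ * x * g) ^ 3 = x := by
      rw [cp, ← hc]; group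
    have hw5 : (g⁻¹ * x * g) ^ 5 = 1 := by rw [cp, hx5]; group
    have h6 : (g⁻¹ * x * g) ^ 6 = g⁻¹ * x * g := by
      rw [show (6 : ℕ) = 5 + 1 from rfl, pow_succ, hw5, one_mul]
    have h6' : (g⁻¹ * x * g) ^ 6 = x ^ 2 := by
      rw [show (6 : ℕ) = 3 * 2 from rfl, pow_mul, hw3]
    exact lemB h5K x g⁻¹ hxo (by rw [inv_inv]; exact h6.symm.trans h6')
  · exfalso
    have hc : g * x * g⁻¹ = x ^ 4 := hk'.symm
    have hx4 : x ^ (4 : ℕ) = x⁻¹ :=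
      eq_inv_of_mul_eq_one_left (by rw [← pow_succ]; exact hx5)
    have hA := lemA h2K h5K x g hxo (hc.trans hx4)
    have hdvd := orderOf_dvd_of_pow_eq_one hA
    rw [hg] at hdvd
    norm_num at hdvd
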